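/- arXiv:nlin/0111050 — 3 statements merged into one kernel-verified Lean document; each statement's English description precedes it below -/
import Mathlib

section
/- If h : ℝ → ℝ solves the Blasius equation h''' + (1/2)·h·h'' = 0 with h(0) = h'(0) = 0 and h''(0) = a > 0, then h''(ξ) = a·exp(−(1/2)∫₀^ξ h(t) dt) for all ξ, and in particular h''(ξ) > 0 for all ξ ≥ 0. -/
/-! Read as an equation for `h''`, the Blasius equation `h''' = -(h / 2) h''` is linear of first
order, so the integrating factor `exp (½ ∫₀^ξ h)` makes `h'' · exp (½ ∫₀^ξ h)` constant, equal to
`h''(0) = a`. -/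

open Real intervalIntegral

theorem eq_mul_exp_neg_integral_of_hasDerivAt {y p : ℝ → ℝ} {x₀ : ℝ} (hp : Continuous p)
    (hy : ∀ x ≥ x₀, HasDerivAt y (-(p x * y x)) x) {ξ : ℝ} (hξ : x₀ ≤ ξ) :
    y ξ = y x₀ * exp (-∫ t in x₀..ξ, p t) := by
  set P : ℝ → ℝ := fun x => ∫ t in x₀..x, p t
  have hg : ∀ x ≥ x₀, HasDerivAt (fun x => y x * exp (P x)) 0 x := by
    intro x hx
    have hP : HasDerivAt P (p x) x := (hp.integral_hasStrictDerivAt x₀ x).hasDerivAt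
    have hprod := (hy x hx).mul hP.exp
    rwa [show -(p x * y x) * exp (P x) + y x * (exp (P x) * p x) = 0 by ring] at hprod
  have hconst := constant_of_has_deriv_right_zero (a := x₀) (b := ξ)
    (fun x hx => (hg x hx.1).continuousAt.continuousWithinAt)
    (fun x hx => (hg x hx.1).hasDerivWithinAt) ξ (Set.right_mem_Icc.2 hξ)
  simp only [P, integral_same, exp_zero, mul_one] at hconst
  rw [← hconst, exp_neg, mul_inv_cancel_right₀ (exp_ne_zero _)]

theorem ContDiff.hasDerivAt_iteratedDeriv {f : ℝ → ℝ} {n : ℕ} (hf : ContDiff ℝ (n + 1) f)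
    (x : ℝ) : HasDerivAt (iteratedDeriv n f) (iteratedDeriv (n + 1) f x) x := by
  rw [iteratedDeriv_succ]
  exact ((hf.differentiable_iteratedDeriv n (by exact_mod_cast n.lt_succ_self)) x).hasDerivAt

theorem stmt_2_general (h : ℝ → ℝ) (a : ℝ) (ha : 0 < a) (hh : ContDiff ℝ 3 h)
    (hode : ∀ ξ ≥ (0:ℝ), iteratedDeriv 3 h ξ + (1/2) * h ξ * iteratedDeriv 2 h ξ = 0)
    (h2 : iteratedDeriv 2 h 0 = a) :
    ∀ ξ ≥ (0:ℝ), iteratedDeriv 2 h ξ = a * Real.exp (-(1/2) * ∫ t in (0:ℝ)..ξ, h t)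
      ∧ 0 < iteratedDeriv 2 h ξ := by
  intro ξ hξ
  have hlin : ∀ x ≥ (0:ℝ), HasDerivAt (iteratedDeriv 2 h)
      (-((1/2) * h x * iteratedDeriv 2 h x)) x := fun x hx => by
    rw [← eq_neg_of_add_eq_zero_left (hode x hx)]
    exact hh.hasDerivAt_iteratedDeriv (n := 2) x
  have hsol := eq_mul_exp_neg_integral_of_hasDerivAt
    (hh.continuous.const_mul (1/2)) hlin hξ
  rw [integral_const_mul, h2, ← neg_mul] at hsol
  exact ⟨hsol, hsol ▸ mul_pos ha (exp_pos _)⟩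

theorem stmt_2 (h : ℝ → ℝ) (a : ℝ) (ha : 0 < a) (hh : ContDiff ℝ 3 h)
    (hode : ∀ ξ ≥ (0:ℝ), iteratedDeriv 3 h ξ + (1/2) * h ξ * iteratedDeriv 2 h ξ = 0)
    (h0 : h 0 = 0) (h1 : deriv h 0 = 0) (h2 : iteratedDeriv 2 h 0 = a) :
    ∀ ξ ≥ (0:ℝ), iteratedDeriv 2 h ξ = a * Real.exp (-(1/2) * ∫ t in (0:ℝ)..ξ, h t)
      ∧ 0 < iteratedDeriv 2 h ξ :=
  stmt_2_general h a ha hh hode h2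
end

section
/- If h : ℝ → ℝ solves the Blasius equation h''' + (1/2)·h·h'' = 0 on [0,∞) with h(0) = h'(0) = 0 and h''(0) > 0, then h' is strictly increasing on [0,∞) and h is strictly increasing on (0,∞). -/
/-!
Along a Blasius solution, `h''' = -(1/2) h h''` is a linear equation for `h''`, so
`h''(ξ) = h''(0) exp (-(1/2) ∫₀^ξ h) > 0`. Hence `h'` is strictly increasing on `[0, ∞)`, and since
`h'(0) = 0` it is positive on `(0, ∞)`, where `h` is therefore strictly increasing.
-/

open Set Real

/-- Integrating factor: `g x * exp (-∫ a)` has zero derivative to the right of `x₀`. -/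
theorem eq_mul_exp_integral_of_hasDerivAt_mul_self {g a : ℝ → ℝ} {x₀ : ℝ} (ha : Continuous a)
    (hg : ∀ x ≥ x₀, HasDerivAt g (a x * g x) x) {x : ℝ} (hx : x₀ ≤ x) :
    g x = g x₀ * exp (∫ t in x₀..x, a t) := by
  set A : ℝ → ℝ := fun y => ∫ t in x₀..y, a t
  have hA : ∀ y, HasDerivAt A (a y) y := fun y => (ha.integral_hasStrictDerivAt x₀ y).hasDerivAt
  have hG : ∀ y ≥ x₀, HasDerivAt (fun y => g y * exp (-A y)) 0 y := by
    intro y hy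
    refine ((hg y hy).mul (hA y).neg.exp).congr_deriv ?_
    simp only [Pi.neg_apply]
    ring
  have hconst := constant_of_has_deriv_right_zero (f := fun y => g y * exp (-A y))
    (fun y hy => (hG y hy.1).continuousAt.continuousWithinAt)
    (fun y hy => (hG y hy.1).hasDerivWithinAt) x ⟨hx, le_rfl⟩
  simp only [A, intervalIntegral.integral_same, neg_zero, exp_zero, mul_one] at hconst
  rw [← hconst, mul_assoc, ← exp_add, neg_add_cancel, exp_zero, mul_one]

theorem Blasius.iteratedDeriv_two_pos {h : ℝ → ℝ} (hh : ContDiff ℝ 3 h)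
    (hode : ∀ ξ ≥ (0:ℝ), iteratedDeriv 3 h ξ + (1/2) * h ξ * iteratedDeriv 2 h ξ = 0)
    (h2 : 0 < iteratedDeriv 2 h 0) {ξ : ℝ} (hξ : 0 ≤ ξ) : 0 < iteratedDeriv 2 h ξ := by
  have hderiv : ∀ x ≥ (0:ℝ), HasDerivAt (iteratedDeriv 2 h)
      ((-(1/2) * h x) * iteratedDeriv 2 h x) x := by
    intro x hx
    have h3 : deriv (iteratedDeriv 2 h) = iteratedDeriv 3 h := iteratedDeriv_succ.symm
    have := ((hh.differentiable_iteratedDeriv 2 (by norm_num)) x).hasDerivAt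
    rw [h3] at this
    exact this.congr_deriv (by linarith [hode x hx])
  rw [eq_mul_exp_integral_of_hasDerivAt_mul_self (continuous_const.mul hh.continuous) hderiv hξ]
  positivity

theorem stmt_3_general (h : ℝ → ℝ) (hh : ContDiff ℝ 3 h)
    (hode : ∀ ξ ≥ (0:ℝ), iteratedDeriv 3 h ξ + (1/2) * h ξ * iteratedDeriv 2 h ξ = 0)
    (h1 : deriv h 0 = 0) (h2 : 0 < iteratedDeriv 2 h 0) :
    StrictMonoOn (deriv h) (Set.Ici (0:ℝ)) ∧ StrictMonoOn h (Set.Ioi (0:ℝ)) := by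
  have hderiv_mono : StrictMonoOn (deriv h) (Ici 0) := by
    refine strictMonoOn_of_deriv_pos (convex_Ici 0) (hh.continuous_deriv (by norm_num)).continuousOn
      fun x hx => ?_
    rw [show deriv (deriv h) = iteratedDeriv 2 h by rw [iteratedDeriv_succ, iteratedDeriv_one]]
    exact Blasius.iteratedDeriv_two_pos hh hode h2 (interior_subset hx)
  refine ⟨hderiv_mono, ?_⟩
  refine (strictMonoOn_of_deriv_pos (convex_Ici 0) hh.continuous.continuousOn
    fun x hx => ?_).mono Ioi_subset_Ici_self
  rw [interior_Ici] at hx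
  simpa [h1] using hderiv_mono self_mem_Ici (mem_Ici.mpr hx.le) hx

theorem stmt_3 (h : ℝ → ℝ) (hh : ContDiff ℝ 3 h)
    (hode : ∀ ξ ≥ (0:ℝ), iteratedDeriv 3 h ξ + (1/2) * h ξ * iteratedDeriv 2 h ξ = 0)
    (h0 : h 0 = 0) (h1 : deriv h 0 = 0) (h2 : 0 < iteratedDeriv 2 h 0) :
    StrictMonoOn (deriv h) (Set.Ici (0:ℝ)) ∧ StrictMonoOn h (Set.Ioi (0:ℝ)) :=
  stmt_3_general h hh hode h1 h2
end

section
/- Let h : [0,∞) → ℝ solve h''' + (1/2)h·h'' = 0 with h(0) = h'(0) = 0 and h''(0) = a > 0, and suppose h'(ξ) → 1 as ξ → ∞. Then for all ξ ≥ 0, 0 ≤ h'(ξ) < 1 and 0 ≤ h(ξ) ≤ ξ. -/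
/-!
Along a solution, `g = h''` solves the linear equation `g' = -(h/2) g`, so
`h''(ξ) = a · exp (-(1/2) ∫₀^ξ h) > 0`. Hence `h'` increases strictly from `h'(0) = 0`
towards its limit `1`, giving `0 ≤ h' < 1`, and integrating from `0` gives `0 ≤ h(ξ) ≤ ξ`.
-/

open Set Filter Topology

theorem mul_exp_integral_eq_of_hasDerivAt_neg_mul {g p : ℝ → ℝ} {x₀ : ℝ}
    (hp : Continuous p) (hg : ∀ x ≥ x₀, HasDerivAt g (-(p x * g x)) x) :
    ∀ x ≥ x₀, g x * Real.exp (∫ t in x₀..x, p t) = g x₀ := by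
  set F : ℝ → ℝ := fun x => g x * Real.exp (∫ t in x₀..x, p t)
  have hF : ∀ x ≥ x₀, HasDerivAt F 0 x := fun x hx =>
    ((hg x hx).mul (hp.integral_hasStrictDerivAt x₀ x).hasDerivAt.exp).congr_deriv (by ring)
  have hFc : ContinuousOn F (Ici x₀) := fun x hx => (hF x hx).continuousAt.continuousWithinAt
  intro x hx
  simpa [F] using constant_of_has_deriv_right_zero (hFc.mono Icc_subset_Ici_self)
    (fun y hy => (hF y hy.1).hasDerivWithinAt) x ⟨hx, le_rfl⟩

theorem pos_of_hasDerivAt_neg_mul {g p : ℝ → ℝ} {x₀ : ℝ} (hp : Continuous p)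
    (hg : ∀ x ≥ x₀, HasDerivAt g (-(p x * g x)) x) (hg₀ : 0 < g x₀) :
    ∀ x ≥ x₀, 0 < g x := by
  intro x hx
  have hgx := mul_exp_integral_eq_of_hasDerivAt_neg_mul hp hg x hx
  exact (mul_pos_iff_of_pos_right (Real.exp_pos _)).mp (hgx ▸ hg₀)

theorem StrictMonoOn.lt_of_tendsto_atTop {α β : Type*} [LinearOrder α] [NoMaxOrder α]
    [TopologicalSpace β] [PartialOrder β] [ClosedIciTopology β] {f : α → β} {a : α} {L : β}
    (hf : StrictMonoOn f (Ici a)) (hL : Tendsto f atTop (𝓝 L)) {x : α} (hx : a ≤ x) :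
    f x < L := by
  have : Nonempty α := ⟨a⟩
  obtain ⟨y, hxy⟩ := exists_gt x
  have hay : a ≤ y := hx.trans hxy.le
  refine (hf hx hay hxy).trans_le (ge_of_tendsto hL ?_)
  filter_upwards [eventually_ge_atTop y] with t hyt
  exact hf.monotoneOn hay (hay.trans hyt) hyt

theorem stmt_14 (h : ℝ → ℝ) (a : ℝ) (ha : 0 < a) (hh : ContDiff ℝ 3 h)
    (hode : ∀ ξ ≥ (0:ℝ), iteratedDeriv 3 h ξ + (1/2) * h ξ * iteratedDeriv 2 h ξ = 0)
    (h0 : h 0 = 0) (h1 : deriv h 0 = 0) (h2 : iteratedDeriv 2 h 0 = a)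
    (hlim : Filter.Tendsto (deriv h) Filter.atTop (nhds 1)) :
    ∀ ξ ≥ (0:ℝ), 0 ≤ deriv h ξ ∧ deriv h ξ < 1 ∧ 0 ≤ h ξ ∧ h ξ ≤ ξ := by
  have hdiff (n : ℕ) (hn : n < 3) : Differentiable ℝ (iteratedDeriv n h) :=
    hh.differentiable_iteratedDeriv n (by exact_mod_cast hn)
  have hh'' : ∀ ξ ≥ (0:ℝ),
      HasDerivAt (iteratedDeriv 2 h) (-((1/2) * h ξ * iteratedDeriv 2 h ξ)) ξ := fun ξ hξ => by
    refine (hdiff 2 (by norm_num) ξ).hasDerivAt.congr_deriv ?_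
    rw [← iteratedDeriv_succ]
    linarith [hode ξ hξ]
  have hh''_pos :=
    pos_of_hasDerivAt_neg_mul (continuous_const.mul hh.continuous) hh'' (h2 ▸ ha)
  have hmono : StrictMonoOn (deriv h) (Ici 0) := by
    have hd' : Differentiable ℝ (deriv h) := by simpa using hdiff 1 (by norm_num)
    refine strictMonoOn_of_deriv_pos (convex_Ici 0) hd'.continuous.continuousOn fun x hx => ?_
    rw [interior_Ici] at hx
    simpa [iteratedDeriv_succ] using hh''_pos x hx.le
  have hh'_nonneg : ∀ ξ ≥ (0:ℝ), 0 ≤ deriv h ξ := fun ξ hξ =>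
    h1 ▸ hmono.monotoneOn self_mem_Ici hξ hξ
  have hh'_lt : ∀ ξ ≥ (0:ℝ), deriv h ξ < 1 := fun ξ hξ => hmono.lt_of_tendsto_atTop hlim hξ
  have hd : Differentiable ℝ h := hh.differentiable (by norm_num)
  intro ξ hξ
  refine ⟨hh'_nonneg ξ hξ, hh'_lt ξ hξ, ?_, ?_⟩
  · exact h0 ▸ monotoneOn_of_deriv_nonneg (convex_Ici 0) hd.continuous.continuousOn
      hd.differentiableOn (fun x hx => hh'_nonneg x (interior_subset hx)) self_mem_Ici hξ hξ
  · have hgrowth := (convex_Ici 0).image_sub_le_mul_sub_of_deriv_le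
      hd.continuous.continuousOn
      hd.differentiableOn (fun x hx => (hh'_lt x (interior_subset hx)).le)
      0 self_mem_Ici ξ hξ hξ
    linarith
end
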